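/- Let T ≥ 1 and let G₁, …, G_T > 0 be per-slot energy budgets. Then the infimum of ∑_{i=1}^{T} ∑_{l∈S} f_l(b_{l,i}) over all b : S × {1,…,T} → ℝ with b_{l,i} ≥ 0 and ∑_{i=1}^{k} ∑_{l∈S} b_{l,i} ≤ ∑_{i=1}^{k} G_i for every k ∈ {1,…,T}, equals the infimum of ∑_{i=1}^{T} x(s_i) over all s : {1,…,T} → ℝ with s_i ≥ 0 and ∑_{i=1}^{k} s_i ≤ ∑_{i=1}^{k} G_i for every k ∈ {1,…,T}. -/

import Mathlib

open BigOperators ENNReal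

/-- The per-link cost `f(b) = t / ((1/2)·ln(e^{2t} + b/σ) − t)` for `b > 0`, with the
convention that it is `+∞` when `b ≤ 0` (the denominator vanishes at `b = 0`). -/
noncomputable def fCost (t σ b : ℝ) : ℝ≥0∞ :=
  if 0 < b then
    ENNReal.ofReal (t / ((1 / 2) * Real.log (Real.exp (2 * t) + b / σ) - t))
  else ⊤

/-- The value function
`x(s) = inf { ∑_{l∈S} f_l(b_l) : b_l ≥ 0 for all l, ∑_{l∈S} b_l ≤ s }`,
with values in `[0, +∞]`. -/
noncomputable def xval (S : Type) [Fintype S] (t σ : S → ℝ) (s : ℝ) : ℝ≥0∞ :=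
  sInf { v : ℝ≥0∞ | ∃ b : S → ℝ,
    (∀ l, 0 ≤ b l) ∧ (∑ l, b l) ≤ s ∧ v = ∑ l, fCost (t l) (σ l) (b l) }

/-! The constraints couple the slots only through their loads `∑_l b_{l,i}`, and the cumulative
budget constraints are monotone in the loads. So for fixed load bounds `s_i` the allocation can be
chosen slot by slot: the infimum of a sum of independent terms is the sum of the infima, and the
`i`-th infimum is `x(s_i)`. Conversely the actual loads of an admissible allocation are admissible
load bounds. -/

theorem ENNReal.iInf_pi_sum {ι α : Type*} [Fintype ι] (P : ι → α → Prop) (f : ι → α → ℝ≥0∞) :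
    ⨅ (b : ι → α) (_ : ∀ i, P i (b i)), ∑ i, f i (b i) = ∑ i, ⨅ (a) (_ : P i a), f i a := by
  refine le_antisymm ?_ (le_iInf₂ fun b hb => Finset.sum_le_sum fun i _ => iInf₂_le (b i) (hb i))
  by_cases hP : ∀ i, ∃ a, P i a
  · have (i : ι) : Nonempty {a // P i a} := nonempty_subtype.mpr (hP i)
    have hdir (u : Finset ι) (b b' : (i : ι) → {a // P i a}) : ∃ k : (i : ι) → {a // P i a},
        ∀ i ∈ u, f i (k i) ≤ f i (b i) ∧ f i (k i) ≤ f i (b' i) := by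
      refine ⟨fun i => if f i (b i) ≤ f i (b' i) then b i else b' i, fun i _ => ?_⟩
      by_cases h : f i (b i) ≤ f i (b' i)
      · simp only [if_pos h]; exact ⟨le_rfl, h⟩
      · simp only [if_neg h]; exact ⟨(not_le.mp h).le, le_rfl⟩
    calc ⨅ (b : ι → α) (_ : ∀ i, P i (b i)), ∑ i, f i (b i)
        ≤ ⨅ b : (i : ι) → {a // P i a}, ∑ i, f i (b i) :=
          le_iInf fun b => iInf₂_le (fun i => (b i : α)) fun i => (b i).2
      _ = ∑ i, ⨅ b : (i : ι) → {a // P i a}, f i (b i) := ENNReal.iInf_sum hdir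
      _ = ∑ i, ⨅ (a) (_ : P i a), f i a := by
          refine Finset.sum_congr rfl fun i _ => ?_
          rw [iInf_subtype']
          exact (Function.surjective_eval (β := fun i => {a // P i a}) i).iInf_comp fun a => f i a
  · push Not at hP
    obtain ⟨i, hi⟩ := hP
    have : ⨅ (a) (_ : P i a), f i a = ⊤ := by simp [hi]
    exact le_top.trans_eq (ENNReal.sum_eq_top.mpr ⟨i, Finset.mem_univ i, this⟩).symm

theorem xval_le_sum_fCost {S : Type} [Fintype S] (t σ : S → ℝ) {b : S → ℝ} {s : ℝ}
    (hb : ∀ l, 0 ≤ b l) (hs : ∑ l, b l ≤ s) :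
    xval S t σ s ≤ ∑ l, fCost (t l) (σ l) (b l) :=
  sInf_le ⟨b, hb, hs, rfl⟩

theorem xval_eq_iInf (S : Type) [Fintype S] (t σ : S → ℝ) (s : ℝ) :
    xval S t σ s =
      ⨅ (b : S → ℝ) (_ : (∀ l, 0 ≤ b l) ∧ ∑ l, b l ≤ s), ∑ l, fCost (t l) (σ l) (b l) := by
  refine le_antisymm (le_iInf₂ fun b hb => xval_le_sum_fCost t σ hb.1 hb.2) (le_sInf ?_)
  rintro _ ⟨b, hb, hs, rfl⟩
  exact iInf₂_le b ⟨hb, hs⟩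

theorem multislot_reduction_to_value_function_general (S : Type) [Fintype S]
    (t σ : S → ℝ) (T : ℕ) (G : Fin T → ℝ) :
    sInf { v : ℝ≥0∞ | ∃ b : S → Fin T → ℝ,
        (∀ l i, 0 ≤ b l i) ∧
        (∀ k : Fin T, (∑ i ∈ Finset.Iic k, ∑ l, b l i) ≤ ∑ i ∈ Finset.Iic k, G i) ∧
        v = ∑ i, ∑ l, fCost (t l) (σ l) (b l i) } =
    sInf { v : ℝ≥0∞ | ∃ s : Fin T → ℝ,
        (∀ i, 0 ≤ s i) ∧
        (∀ k : Fin T, (∑ i ∈ Finset.Iic k, s i) ≤ ∑ i ∈ Finset.Iic k, G i) ∧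
        v = ∑ i, xval S t σ (s i) } := by
  apply le_antisymm
  · refine le_sInf ?_
    rintro _ ⟨s, -, hsG, rfl⟩
    calc _ ≤ ⨅ (b : Fin T → S → ℝ) (_ : ∀ i, (∀ l, 0 ≤ b i l) ∧ ∑ l, b i l ≤ s i),
            ∑ i, ∑ l, fCost (t l) (σ l) (b i l) :=
          le_iInf₂ fun b hb => sInf_le (by
            exact ⟨fun l i => b i l, fun l i => (hb i).1 l,
              fun k => (Finset.sum_le_sum fun i _ => (hb i).2).trans (hsG k), rfl⟩)
      _ = ∑ i, xval S t σ (s i) := by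
          simp only [xval_eq_iInf]
          exact ENNReal.iInf_pi_sum (fun i (a : S → ℝ) => (∀ l, 0 ≤ a l) ∧ ∑ l, a l ≤ s i)
            fun _ a => ∑ l, fCost (t l) (σ l) (a l)
  · refine le_sInf ?_
    rintro _ ⟨b, hb, hbG, rfl⟩
    refine le_trans (sInf_le ⟨fun i => ∑ l, b l i, fun i => Finset.sum_nonneg fun l _ => hb l i,
      hbG, rfl⟩) ?_
    exact Finset.sum_le_sum fun i _ => xval_le_sum_fCost t σ (fun l => hb l i) le_rfl

/-- For `T ≥ 1` and per-slot energy budgets `G₁, …, G_T > 0`, the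
infimum of `∑_{i=1}^T ∑_{l∈S} f_l(b_{l,i})` over all `b ≥ 0` satisfying the
cumulative constraints `∑_{i≤k} ∑_l b_{l,i} ≤ ∑_{i≤k} G_i` for every `k`, equals the
infimum of `∑_{i=1}^T x(s_i)` over all `s ≥ 0` satisfying
`∑_{i≤k} s_i ≤ ∑_{i≤k} G_i` for every `k`. -/
theorem multislot_reduction_to_value_function (S : Type) [Fintype S] [Nonempty S]
    (t σ : S → ℝ) (ht : ∀ l, 0 < t l) (hσ : ∀ l, 0 < σ l)
    (T : ℕ) (hT : 1 ≤ T) (G : Fin T → ℝ) (hG : ∀ i, 0 < G i) :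
    sInf { v : ℝ≥0∞ | ∃ b : S → Fin T → ℝ,
        (∀ l i, 0 ≤ b l i) ∧
        (∀ k : Fin T, (∑ i ∈ Finset.Iic k, ∑ l, b l i) ≤ ∑ i ∈ Finset.Iic k, G i) ∧
        v = ∑ i, ∑ l, fCost (t l) (σ l) (b l i) } =
    sInf { v : ℝ≥0∞ | ∃ s : Fin T → ℝ,
        (∀ i, 0 ≤ s i) ∧
        (∀ k : Fin T, (∑ i ∈ Finset.Iic k, s i) ≤ ∑ i ∈ Finset.Iic k, G i) ∧
        v = ∑ i, xval S t σ (s i) } :=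
  multislot_reduction_to_value_function_general S t σ T G
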